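/- Let X ∈ B(L²(𝕋)) satisfy X M_z P₊ = M_z X P₊. Then φ := X(1) satisfies φ ∈ L∞(𝕋) with ‖φ‖_∞ ≤ ‖X‖, and X f = φ f for all f ∈ H²(𝕋), i.e. X P₊ = M_φ P₊. -/

import Mathlib

open MeasureTheory Complex AddCircle
open scoped InnerProductSpace ENNReal Real

noncomputable section

namespace PaperTH

instance fact2pi : Fact (0 < 2 * Real.pi) := ⟨by positivity⟩

/-- The circle, as `ℝ / 2πℤ`. -/
abbrev 𝕋c := AddCircle (2 * Real.pi)

/-- The normalized Lebesgue (Haar) measure on the circle. -/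
abbrev μc : Measure 𝕋c := haarAddCircle

/-- `L²(𝕋)`. -/
abbrev L2 := Lp ℂ 2 μc

/-- The Hardy space `H²(𝕋)`: members of `L²(𝕋)` all of whose Fourier coefficients of
negative index vanish. -/
def Hardy : Submodule ℂ L2 where
  carrier := {f | ∀ n : ℤ, n < 0 → fourierCoeff (⇑f) n = 0}
  add_mem' := by
    intro f g hf hg n hn
    have hf' := hf n hn
    have hg' := hg n hn
    rw [← fourierBasis_repr] at hf' hg' ⊢
    rw [map_add, lp.coeFn_add, Pi.add_apply, hf', hg', add_zero]
  zero_mem' := by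
    intro n hn
    rw [← fourierBasis_repr, map_zero, lp.coeFn_zero, Pi.zero_apply]
  smul_mem' := by
    intro c f hf n hn
    have hf' := hf n hn
    rw [← fourierBasis_repr] at hf' ⊢
    rw [_root_.map_smul, lp.coeFn_smul, Pi.smul_apply, hf', smul_zero]

theorem isClosed_Hardy : IsClosed (Hardy : Set L2) := by
  have h : (Hardy : Set L2) =
      ⋂ (n : ℤ) (_ : n < 0), ((innerSL ℂ (fourierBasis n)) ⁻¹' {(0 : ℂ)}) := by
    ext f
    simp only [Set.mem_iInter, Set.mem_preimage, Set.mem_singleton_iff, SetLike.mem_coe]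
    constructor
    · intro hf n hn
      have := hf n hn
      rw [← fourierBasis_repr, fourierBasis.repr_apply_apply] at this
      simpa using this
    · intro hf n hn
      have := hf n hn
      rw [← fourierBasis_repr, fourierBasis.repr_apply_apply]
      simpa using this
  rw [h]
  exact isClosed_iInter fun n => isClosed_iInter fun _ =>
    (isClosed_singleton).preimage (innerSL ℂ (fourierBasis n)).continuous

instance : CompleteSpace Hardy := isClosed_Hardy.completeSpace_coe

/-- The Szegő projection `P₊ : L²(𝕋) → L²(𝕋)` onto the Hardy space. -/
def Pplus : L2 →L[ℂ] L2 := Hardy.subtypeL.comp (Submodule.orthogonalProjectionOnto Hardy)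

/-- `P₋ = I - P₊`. -/
def Pminus : L2 →L[ℂ] L2 := ContinuousLinearMap.id ℂ L2 - Pplus

/-- Underlying function of the multiplication operator. -/
def MopFun (φ : 𝕋c → ℂ) (hφ : MemLp φ ∞ μc) (f : L2) : L2 :=
  ((Lp.memLp f).smul hφ).toLp (φ • ⇑f)

theorem MopFun_coeFn (φ : 𝕋c → ℂ) (hφ : MemLp φ ∞ μc) (f : L2) :
    ⇑(MopFun φ hφ f) =ᵐ[μc] φ • ⇑f := MemLp.coeFn_toLp _

theorem MopFun_add (φ : 𝕋c → ℂ) (hφ : MemLp φ ∞ μc) (f g : L2) :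
    MopFun φ hφ (f + g) = MopFun φ hφ f + MopFun φ hφ g := by
  apply Lp.ext
  filter_upwards [MopFun_coeFn φ hφ (f + g), MopFun_coeFn φ hφ f, MopFun_coeFn φ hφ g,
    Lp.coeFn_add f g, Lp.coeFn_add (MopFun φ hφ f) (MopFun φ hφ g)] with x h1 h2 h3 h4 h5
  simp only [h1, h5, Pi.add_apply, h2, h3, Pi.smul_apply, Pi.mul_apply, smul_eq_mul, h4]
  ring

theorem MopFun_smul (φ : 𝕋c → ℂ) (hφ : MemLp φ ∞ μc) (c : ℂ) (f : L2) :
    MopFun φ hφ (c • f) = c • MopFun φ hφ f := by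
  apply Lp.ext
  filter_upwards [MopFun_coeFn φ hφ (c • f), MopFun_coeFn φ hφ f,
    Lp.coeFn_smul c f, Lp.coeFn_smul c (MopFun φ hφ f)] with x h1 h2 h3 h4
  simp only [h1, h4, Pi.smul_apply, Pi.mul_apply, h2, h3, smul_eq_mul]
  ring

theorem MopFun_norm (φ : 𝕋c → ℂ) (hφ : MemLp φ ∞ μc) (f : L2) :
    ‖MopFun φ hφ f‖ ≤ (eLpNorm φ ∞ μc).toReal * ‖f‖ := by
  have hrfl : MopFun φ hφ f = ((Lp.memLp f).smul hφ).toLp (φ • ⇑f) := rfl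
  rw [hrfl, Lp.norm_toLp (φ • ⇑f) ((Lp.memLp f).smul hφ), Lp.norm_def]
  have hb : eLpNorm (φ • ⇑f) 2 μc ≤ eLpNorm φ ∞ μc * eLpNorm (⇑f) 2 μc :=
    eLpNorm_smul_le_eLpNorm_top_mul_eLpNorm 2 (Lp.aestronglyMeasurable f) φ
  have hfin : eLpNorm φ ∞ μc * eLpNorm (⇑f) 2 μc ≠ ∞ :=
    ENNReal.mul_ne_top hφ.eLpNorm_ne_top (Lp.eLpNorm_ne_top f)
  calc (eLpNorm (φ • ⇑f) 2 μc).toReal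
      ≤ (eLpNorm φ ∞ μc * eLpNorm (⇑f) 2 μc).toReal := ENNReal.toReal_mono hfin hb
    _ = (eLpNorm φ ∞ μc).toReal * (eLpNorm (⇑f) 2 μc).toReal := ENNReal.toReal_mul

/-- The multiplication (Laurent) operator `M_φ` on `L²(𝕋)` with symbol `φ ∈ L∞(𝕋)`. -/
def Mop (φ : 𝕋c → ℂ) (hφ : MemLp φ ∞ μc) : L2 →L[ℂ] L2 :=
  LinearMap.mkContinuous
    { toFun := MopFun φ hφ
      map_add' := MopFun_add φ hφ
      map_smul' := MopFun_smul φ hφ }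
    (eLpNorm φ ∞ μc).toReal
    (fun f => MopFun_norm φ hφ f)

theorem Mop_coeFn (φ : 𝕋c → ℂ) (hφ : MemLp φ ∞ μc) (f : L2) :
    ⇑(Mop φ hφ f) =ᵐ[μc] fun x => φ x * f x :=
  MopFun_coeFn φ hφ f

/-- The conjugation operator `J : L²(𝕋) → L²(𝕋)`, `(Jf)(z) = f(z̄)`
(composition with `x ↦ -x` on the additive circle). -/
def Jop : L2 →L[ℂ] L2 :=
  LinearMap.mkContinuous
    { toFun := fun f =>
        Lp.compMeasurePreserving (fun x : 𝕋c => -x) (Measure.measurePreserving_neg μc) f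
      map_add' := by
        intro f g
        exact map_add (Lp.compMeasurePreserving _ (Measure.measurePreserving_neg μc)) f g
      map_smul' := by
        intro c f
        apply Lp.ext
        simp only [RingHom.id_apply]
        have hmp := Measure.measurePreserving_neg (μ := μc)
        have h1 := Lp.coeFn_compMeasurePreserving (μ := μc) (c • f) hmp
        have h2 := Lp.coeFn_compMeasurePreserving (μ := μc) f hmp
        have h3 : ⇑(c • f) ∘ (fun x : 𝕋c => -x) =ᵐ[μc] (c • ⇑f) ∘ (fun x : 𝕋c => -x) :=
          hmp.quasiMeasurePreserving.ae_eq_comp (Lp.coeFn_smul c f)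
        have h4 : (c • ⇑f) ∘ (fun x : 𝕋c => -x) = c • (⇑f ∘ fun x : 𝕋c => -x) := rfl
        have h5 : c • (⇑f ∘ fun x : 𝕋c => -x) =ᵐ[μc]
            c • ⇑(Lp.compMeasurePreserving (fun x : 𝕋c => -x) hmp f) :=
          h2.symm.const_smul c
        exact ((h1.trans h3).trans ((h4 ▸ h5 : _))).trans (Lp.coeFn_smul c _).symm }
    1
    (by
      intro f
      simp only [LinearMap.coe_mk, AddHom.coe_mk, one_mul]
      exact le_of_eq (Lp.norm_compMeasurePreserving f _))

/-- The Toeplitz operator `T_φ = P₊ M_φ |_{H²}` with symbol `φ ∈ L∞(𝕋)`. -/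
def Toep (φ : 𝕋c → ℂ) (hφ : MemLp φ ∞ μc) : Hardy →L[ℂ] Hardy :=
  (Submodule.orthogonalProjectionOnto Hardy).comp ((Mop φ hφ).comp Hardy.subtypeL)

/-- The Hankel operator `H_φ = P₊ M_φ J |_{H²}` with symbol `φ ∈ L∞(𝕋)`. -/
def Hank (φ : 𝕋c → ℂ) (hφ : MemLp φ ∞ μc) : Hardy →L[ℂ] Hardy :=
  (Submodule.orthogonalProjectionOnto Hardy).comp ((Mop φ hφ).comp (Jop.comp Hardy.subtypeL))

/-- The coordinate function `z` on the circle. -/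
def zFun : 𝕋c → ℂ := fun x => fourier 1 x

theorem zFun_memℒp : MemLp zFun ∞ μc := by
  refine memLp_top_of_bound ((fourier 1).continuous.aestronglyMeasurable) 1
    (Filter.Eventually.of_forall fun x => ?_)
  simp only [zFun, fourier_apply, Circle.norm_coe, le_refl]

/-- The unilateral shift `T_z`. -/
def Tz : Hardy →L[ℂ] Hardy := Toep zFun zFun_memℒp

/-- The bilateral shift `M_z` on `L²(𝕋)`. -/
def Mz : L2 →L[ℂ] L2 := Mop zFun zFun_memℒp

/-- `A` is a Toeplitz + Hankel operator. -/
def IsToepPlusHank (A : Hardy →L[ℂ] Hardy) : Prop :=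
  ∃ (φ ψ : 𝕋c → ℂ) (hφ : MemLp φ ∞ μc) (hψ : MemLp ψ ∞ μc), A = Toep φ hφ + Hank ψ hψ

/-- `φ` belongs to `H^∞`: it is essentially bounded and all its negative Fourier
coefficients vanish. -/
def IsHinf (φ : 𝕋c → ℂ) : Prop :=
  MemLp φ ∞ μc ∧ ∀ n : ℤ, n < 0 → fourierCoeff φ n = 0

/-- `θ` is an inner function: `θ ∈ H^∞` and `|θ| = 1` a.e. on the circle. -/
def IsInner (θ : 𝕋c → ℂ) : Prop :=
  IsHinf θ ∧ ∀ᵐ x ∂μc, ‖θ x‖ = 1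

theorem Mop_norm_of_inner {θ : 𝕋c → ℂ} (hθ : IsInner θ) (f : L2) :
    ‖Mop θ hθ.1.1 f‖ = ‖f‖ := by
  have h1 : ⇑(Mop θ hθ.1.1 f) =ᵐ[μc] θ • ⇑f := MopFun_coeFn θ hθ.1.1 f
  rw [Lp.norm_def, Lp.norm_def]
  congr 1
  rw [eLpNorm_congr_ae h1]
  apply eLpNorm_congr_norm_ae
  filter_upwards [hθ.2] with x hx
  simp [norm_smul, hx]

/-- The (Beurling-type) subspace `θ H²` of the Hardy space, for an inner function `θ`. -/
def thetaSub (θ : 𝕋c → ℂ) (hθ : IsInner θ) : Submodule ℂ Hardy where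
  carrier := {f | ∃ g : Hardy, (f : L2) = Mop θ hθ.1.1 (g : L2)}
  add_mem' := by
    rintro f f' ⟨g, hg⟩ ⟨g', hg'⟩
    exact ⟨g + g', by
      simp only [Submodule.coe_add, hg, hg']
      rw [← map_add]⟩
  zero_mem' := ⟨0, by simp⟩
  smul_mem' := by
    rintro c f ⟨g, hg⟩
    exact ⟨c • g, by
      rw [Submodule.coe_smul, hg, ← (Mop θ hθ.1.1).map_smul]
      rfl⟩

theorem isClosed_thetaSub (θ : 𝕋c → ℂ) (hθ : IsInner θ) :
    IsClosed ((thetaSub θ hθ) : Set Hardy) := by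
  have hiso : Isometry (fun g : Hardy => Mop θ hθ.1.1 (g : L2)) := by
    apply Isometry.of_dist_eq
    intro g g'
    rw [dist_eq_norm, dist_eq_norm, ← map_sub, ← Submodule.coe_sub, Mop_norm_of_inner hθ]
    rfl
  have hrange : IsClosed (Set.range fun g : Hardy => Mop θ hθ.1.1 (g : L2)) :=
    hiso.isClosedEmbedding.isClosed_range
  have hset : ((thetaSub θ hθ) : Set Hardy) =
      (Subtype.val) ⁻¹' (Set.range fun g : Hardy => Mop θ hθ.1.1 (g : L2)) := by
    ext f
    constructor
    · rintro ⟨g, hg⟩; exact ⟨g, hg.symm⟩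
    · rintro ⟨g, hg⟩; exact ⟨g, hg.symm⟩
  rw [hset]
  exact hrange.preimage continuous_subtype_val

/-- The model space `𝒦_θ = H² ⊖ θH²`. -/
def modelSpace (θ : 𝕋c → ℂ) (hθ : IsInner θ) : Submodule ℂ Hardy := (thetaSub θ hθ)ᗮ

/-- The orthogonal projection of `H²` onto `θH²`. -/
def Ptheta (θ : 𝕋c → ℂ) (hθ : IsInner θ) : Hardy →L[ℂ] Hardy :=
  haveI : CompleteSpace (thetaSub θ hθ) := (isClosed_thetaSub θ hθ).completeSpace_coe
  (thetaSub θ hθ).subtypeL.comp (Submodule.orthogonalProjectionOnto (thetaSub θ hθ))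

/-- The orthogonal projection of `H²` onto the model space `𝒦_θ`. -/
def Pmodel (θ : 𝕋c → ℂ) (hθ : IsInner θ) : Hardy →L[ℂ] Hardy :=
  haveI hc : CompleteSpace (thetaSub θ hθ) := (isClosed_thetaSub θ hθ).completeSpace_coe
  haveI h2 : Submodule.HasOrthogonalProjection (modelSpace θ hθ) :=
    (inferInstance : Submodule.HasOrthogonalProjection (thetaSub θ hθ)ᗮ)
  (modelSpace θ hθ).subtypeL.comp (Submodule.orthogonalProjectionOnto (modelSpace θ hθ))

/-- The monomial `z^k`, as an element of the Hardy space. -/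
def monoH (k : ℕ) : Hardy :=
  ⟨fourierLp 2 (k : ℤ), by
    intro n hn
    rw [← fourierBasis_repr]
    have hb : (fourierLp 2 (k : ℤ) : L2) = fourierBasis (k : ℤ) := by rw [coe_fourierBasis]
    rw [hb, fourierBasis.repr_self]
    exact lp.single_apply_ne 2 (k : ℤ) _ (by omega)⟩

/-- `T_z^*`, the adjoint of the unilateral shift. -/
def TzStar : Hardy →L[ℂ] Hardy := ContinuousLinearMap.adjoint Tz

/-- `M_z^*`, the adjoint of the bilateral shift. -/
def MzStar : L2 →L[ℂ] L2 := ContinuousLinearMap.adjoint Mz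

/-- The constant function `1` as an element of `L²(𝕋)`. -/
def oneL2 : L2 := (memLp_const (1 : ℂ)).toLp (fun _ => (1 : ℂ))

/-- The function `z̄ = conj z` on the circle. -/
def zbarFun : 𝕋c → ℂ := fun x => fourier (-1) x

theorem zbarFun_memℒp : MemLp zbarFun ∞ μc := by
  refine memLp_top_of_bound ((fourier (-1)).continuous.aestronglyMeasurable) 1
    (Filter.Eventually.of_forall fun x => ?_)
  simp only [zbarFun, fourier_apply, Circle.norm_coe, le_refl]

/-- The function `z̄` as an element of `L²(𝕋)`. -/
def zbarL2 : L2 := (zbarFun_memℒp.mono_exponent le_top).toLp zbarFun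

theorem zbarsq_memℒp {ψ : 𝕋c → ℂ} (hψ : MemLp ψ ∞ μc) :
    MemLp (fun x : 𝕋c => ((starRingEnd ℂ) (zFun x) ^ 2 - 1) * ψ x) ∞ μc := by
  have hc : Continuous fun x : 𝕋c => (starRingEnd ℂ) (zFun x) ^ 2 - 1 := by
    have h1 : Continuous (zFun) := (fourier 1).continuous
    exact ((h1.star.pow 2).sub continuous_const)
  have hb : MemLp (fun x : 𝕋c => (starRingEnd ℂ) (zFun x) ^ 2 - 1) ∞ μc := by
    refine memLp_top_of_bound hc.aestronglyMeasurable 2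
      (Filter.Eventually.of_forall fun x => ?_)
    calc ‖(starRingEnd ℂ) (zFun x) ^ 2 - 1‖ ≤ ‖(starRingEnd ℂ) (zFun x) ^ 2‖ + ‖(1 : ℂ)‖ :=
          norm_sub_le _ _
      _ ≤ 2 := by
          rw [norm_pow, RCLike.norm_conj]
          simp only [zFun, fourier_apply, Circle.norm_coe, norm_one]
          norm_num
  have h2 := hψ.smul (r := ∞) hb
  have h3 : ((fun x : 𝕋c => (starRingEnd ℂ) (zFun x) ^ 2 - 1) • ψ) =
      fun x : 𝕋c => ((starRingEnd ℂ) (zFun x) ^ 2 - 1) * ψ x := by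
    funext x
    simp only [Pi.smul_apply, smul_eq_mul, Pi.mul_apply]
  exact h3 ▸ h2

/-- `A` is `θ`-paired: `A = T_φ P_{θH²} + T_ψ P_{𝒦_θ}` for some `φ, ψ ∈ H^∞`. -/
def IsThetaPaired (θ : 𝕋c → ℂ) (hθ : IsInner θ) (X : Hardy →L[ℂ] Hardy) : Prop :=
  ∃ (φ ψ : 𝕋c → ℂ) (hφ : IsHinf φ) (hψ : IsHinf ψ),
    X = (Toep φ hφ.1).comp (Ptheta θ hθ) + (Toep ψ hψ.1).comp (Pmodel θ hθ)

end PaperTH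

/-!
Commuting with `M_z` on `H²` forces `X zⁿ = zⁿ φ` for `n ≥ 0`, so `X` acts as `M_φ` on analytic
polynomials. Since `|z| = 1`, shifting by a power of `z` turns this into `‖φ p‖₂ ≤ ‖X‖ ‖p‖₂` for
every trigonometric polynomial `p`; by density and Fatou's lemma it holds for every `p ∈ L²`, and
testing against indicator functions gives `|φ| ≤ ‖X‖` almost everywhere. Finally `X P₊` and
`M_φ P₊` agree on every monomial `zⁿ`, `n ∈ ℤ`.
-/

namespace MeasureTheory

open Filter Topology
open scoped NNReal

variable {α 𝕜 : Type*} [MeasurableSpace α] {μ : Measure α} [NormedRing 𝕜] {p : ℝ≥0∞}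
  {φ : α → 𝕜} {C : ℝ≥0}

-- Fatou's lemma along an a.e. convergent subsequence of an approximating sequence from `D`.
theorem eLpNorm_mul_le_of_dense [Fact (1 ≤ p)] (hφ : AEStronglyMeasurable φ μ)
    {D : Set (Lp 𝕜 p μ)} (hD : Dense D)
    (hC : ∀ f ∈ D, eLpNorm (fun x => φ x * f x) p μ ≤ C * eLpNorm f p μ) (f : Lp 𝕜 p μ) :
    eLpNorm (fun x => φ x * f x) p μ ≤ C * eLpNorm f p μ := by
  obtain ⟨u, huD, hu⟩ := mem_closure_iff_seq_limit.mp (hD f)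
  have hp : p ≠ 0 := (zero_lt_one.trans_le Fact.out).ne'
  obtain ⟨ns, hns, hae⟩ := (tendstoInMeasure_of_tendsto_eLpNorm hp
    (fun n => Lp.aestronglyMeasurable (u n)) (Lp.aestronglyMeasurable f)
    ((Lp.tendsto_Lp_iff_tendsto_eLpNorm' u f).mp hu)).exists_seq_tendsto_ae
  have hnorm : Tendsto (fun n => eLpNorm (u (ns n)) p μ) atTop (𝓝 (eLpNorm f p μ)) := by
    simp only [← Lp.enorm_def]
    exact (continuous_enorm.tendsto f).comp (hu.comp hns.tendsto_atTop)
  calc eLpNorm (fun x => φ x * f x) p μ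
      ≤ liminf (fun n => eLpNorm (fun x => φ x * u (ns n) x) p μ) atTop :=
        Lp.eLpNorm_lim_le_liminf_eLpNorm (fun n => hφ.mul (Lp.aestronglyMeasurable _)) _
          (by filter_upwards [hae] with x hx using hx.const_mul (φ x))
    _ ≤ liminf (fun n => C * eLpNorm (u (ns n)) p μ) atTop :=
        liminf_le_liminf (Eventually.of_forall fun n => hC _ (huD _))
    _ = C * eLpNorm f p μ :=
        (ENNReal.Tendsto.const_mul hnorm (Or.inr ENNReal.coe_ne_top)).liminf_eq

-- Test the bound against indicators of sets of finite measure.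
theorem ae_enorm_le_of_eLpNorm_mul_le [NormOneClass 𝕜] [SigmaFinite μ] [Fact (1 ≤ p)]
    (hp : p ≠ ∞) (hφ : AEStronglyMeasurable φ μ)
    (hC : ∀ f : Lp 𝕜 p μ, eLpNorm (fun x => φ x * f x) p μ ≤ C * eLpNorm f p μ) :
    ∀ᵐ x ∂μ, ‖φ x‖ₑ ≤ C := by
  have hp0 : p ≠ 0 := (zero_lt_one.trans_le Fact.out).ne'
  set r := p.toReal
  have hr : 0 < r := ENNReal.toReal_pos hp0 hp
  have hset : ∀ s, MeasurableSet s → μ s < ∞ →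
      ∫⁻ x in s, ‖φ x‖ₑ ^ r ∂μ ≤ ∫⁻ _ in s, (C : ℝ≥0∞) ^ r ∂μ := by
    intro s hs hμs
    have hmul : (fun x => φ x * indicatorConstLp p hs hμs.ne (1 : 𝕜) x) =ᵐ[μ] s.indicator φ := by
      filter_upwards [indicatorConstLp_coeFn (p := p) (hs := hs) (hμs := hμs.ne) (c := (1 : 𝕜))]
        with x hx
      by_cases hxs : x ∈ s <;> simp [hx, hxs]
    have hCs : eLpNorm φ p (μ.restrict s) ≤ C * μ s ^ (1 / r) := by
      have := hC (indicatorConstLp p hs hμs.ne (1 : 𝕜))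
      rwa [eLpNorm_congr_ae hmul, eLpNorm_indicator_eq_eLpNorm_restrict hs,
        eLpNorm_congr_ae indicatorConstLp_coeFn, eLpNorm_indicator_const hs hp0 hp, enorm_one,
        one_mul] at this
    calc ∫⁻ x in s, ‖φ x‖ₑ ^ r ∂μ = eLpNorm φ p (μ.restrict s) ^ r := by
          rw [lintegral_rpow_enorm_eq_rpow_eLpNorm' hr, eLpNorm_eq_eLpNorm' hp0 hp]
      _ ≤ (C * μ s ^ (1 / r)) ^ r := ENNReal.rpow_le_rpow hCs hr.le
      _ = ∫⁻ _ in s, (C : ℝ≥0∞) ^ r ∂μ := by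
          rw [setLIntegral_const, ENNReal.mul_rpow_of_nonneg _ _ hr.le, ← ENNReal.rpow_mul,
            one_div_mul_cancel hr.ne', ENNReal.rpow_one]
  filter_upwards [ae_le_of_forall_setLIntegral_le_of_sigmaFinite₀ (hφ.enorm.pow_const r) hset]
    with x hx
  exact (ENNReal.rpow_le_rpow_iff hr).mp hx

end MeasureTheory

namespace PaperTH

def trigPoly : Submodule ℂ L2 := Submodule.span ℂ (Set.range (fourierLp 2))

def analyticPoly : Submodule ℂ L2 := Submodule.span ℂ (Set.range fun n : ℕ => fourierLp 2 (n : ℤ))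

theorem dense_trigPoly : Dense (trigPoly : Set L2) :=
  Submodule.dense_iff_topologicalClosure_eq_top.mpr (span_fourierLp_closure_eq_top (by simp))

theorem fourierLp_natCast_mem_analyticPoly (n : ℕ) : fourierLp 2 (n : ℤ) ∈ analyticPoly :=
  Submodule.subset_span ⟨n, rfl⟩

theorem fourierLp_mem_Hardy {n : ℤ} (hn : 0 ≤ n) : fourierLp 2 n ∈ Hardy := by
  intro m hm
  rw [← fourierBasis_repr, ← coe_fourierBasis, fourierBasis.repr_self]
  exact lp.single_apply_ne 2 n _ (by omega)

theorem fourierLp_mem_orthogonal_Hardy {n : ℤ} (hn : n < 0) : fourierLp 2 n ∈ Hardyᗮ := by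
  rw [Submodule.mem_orthogonal']
  intro g hg
  rw [← coe_fourierBasis, ← fourierBasis.repr_apply_apply, fourierBasis_repr]
  exact hg n hn

theorem Pplus_apply_of_mem {f : L2} (hf : f ∈ Hardy) : Pplus f = f :=
  Hardy.starProjection_eq_self_iff.mpr hf

theorem Pplus_fourierLp_mem_analyticPoly (n : ℤ) : Pplus (fourierLp 2 n) ∈ analyticPoly := by
  rcases lt_or_ge n 0 with hn | hn
  · have : Pplus (fourierLp 2 n) = 0 :=
      Hardy.starProjection_apply_eq_zero_iff.mpr (fourierLp_mem_orthogonal_Hardy hn)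
    exact this ▸ analyticPoly.zero_mem
  · lift n to ℕ using hn
    exact (Pplus_apply_of_mem (fourierLp_mem_Hardy (Int.natCast_nonneg n))).symm ▸
      fourierLp_natCast_mem_analyticPoly n

theorem oneL2_eq_fourierLp_zero : oneL2 = fourierLp 2 0 := by
  apply Lp.ext
  filter_upwards [MemLp.coeFn_toLp (memLp_const (1 : ℂ)), coeFn_fourierLp (T := 2 * π) 2 0]
    with x h1 h2
  rw [oneL2, h1, h2, fourier_zero]

theorem coeFn_Mz (f : L2) : ⇑(Mz f) =ᵐ[μc] fun x => fourier 1 x * f x :=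
  Mop_coeFn zFun zFun_memℒp f

theorem Mz_fourierLp (n : ℤ) : Mz (fourierLp 2 n) = fourierLp 2 (n + 1) := by
  apply Lp.ext
  filter_upwards [coeFn_Mz (fourierLp 2 n), coeFn_fourierLp 2 n, coeFn_fourierLp 2 (n + 1)]
    with x h1 h2 h3
  rw [h1, h2, h3, add_comm n 1, fourier_add]

theorem Mz_pow_fourierLp (N : ℕ) (n : ℤ) : (Mz ^ N) (fourierLp 2 n) = fourierLp 2 (n + N) := by
  induction N with
  | zero => simp
  | succ N ih => rw [pow_succ', mul_apply_eq_comp, ih, Mz_fourierLp]; push_cast; ring_nf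

theorem ae_norm_Mz_pow_apply (N : ℕ) (f : L2) : ∀ᵐ x ∂μc, ‖(Mz ^ N) f x‖ = ‖f x‖ := by
  induction N with
  | zero => simp
  | succ N ih =>
    filter_upwards [coeFn_Mz ((Mz ^ N) f), ih] with x h1 h2
    rw [pow_succ', mul_apply_eq_comp, h1, norm_mul, h2, fourier_apply, Circle.norm_coe, one_mul]

theorem exists_Mz_pow_mem_analyticPoly {v : L2} (hv : v ∈ trigPoly) :
    ∃ N : ℕ, ∀ M ≥ N, (Mz ^ M) v ∈ analyticPoly := by
  induction hv using Submodule.span_induction with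
  | mem v hv =>
    obtain ⟨n, rfl⟩ := hv
    refine ⟨(-n).toNat, fun M hM => ?_⟩
    rw [Mz_pow_fourierLp]
    lift n + M to ℕ using (by omega) with k
    exact fourierLp_natCast_mem_analyticPoly k
  | zero => exact ⟨0, fun M _ => by simp⟩
  | add v w _ _ hv hw =>
    obtain ⟨N₁, hN₁⟩ := hv
    obtain ⟨N₂, hN₂⟩ := hw
    exact ⟨max N₁ N₂, fun M hM => by
      rw [map_add]
      exact add_mem (hN₁ M (le_of_max_le_left hM)) (hN₂ M (le_of_max_le_right hM))⟩
  | smul c v _ hv =>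
    obtain ⟨N, hN⟩ := hv
    exact ⟨N, fun M hM => by rw [map_smul]; exact analyticPoly.smul_mem c (hN M hM)⟩

section Intertwining

variable {X : L2 →L[ℂ] L2} (hX : ∀ f ∈ Hardy, X (Mz f) = Mz (X f))
include hX

theorem coeFn_apply_fourierLp_natCast (n : ℕ) :
    ⇑(X (fourierLp 2 (n : ℤ))) =ᵐ[μc] fun x => X oneL2 x * fourier n x := by
  induction n with
  | zero => simp [← oneL2_eq_fourierLp_zero]
  | succ n ih =>
    rw [Nat.cast_succ, ← Mz_fourierLp, hX _ (fourierLp_mem_Hardy (Int.natCast_nonneg n))]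
    filter_upwards [coeFn_Mz (X (fourierLp 2 (n : ℤ))), ih] with x h1 h2
    rw [h1, h2, add_comm (n : ℤ) 1, fourier_add]
    ring

theorem coeFn_apply_of_mem_analyticPoly {v : L2} (hv : v ∈ analyticPoly) :
    ⇑(X v) =ᵐ[μc] fun x => X oneL2 x * v x := by
  induction hv using Submodule.span_induction with
  | mem v hv =>
    obtain ⟨n, rfl⟩ := hv
    filter_upwards [coeFn_apply_fourierLp_natCast hX n, coeFn_fourierLp 2 (n : ℤ)] with x h1 h2
    rw [h1, h2]
  | zero =>
    rw [map_zero]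
    filter_upwards with x
    simp
  | add v w _ _ hv hw =>
    filter_upwards [hv, hw, Lp.coeFn_add v w, X.map_add v w ▸ Lp.coeFn_add (X v) (X w)]
      with x h1 h2 h3 h4
    simp only [h4, h3, Pi.add_apply, h1, h2, mul_add]
  | smul c v _ hv =>
    filter_upwards [hv, Lp.coeFn_smul c v, X.map_smul c v ▸ Lp.coeFn_smul c (X v)]
      with x h1 h2 h3
    simp only [h3, h2, Pi.smul_apply, h1, smul_eq_mul]
    ring

-- Multiplying by a power of `z`, which is unimodular, moves a trigonometric polynomial into
-- the span of the nonnegative monomials, where `X` acts as multiplication by `X 1`.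
theorem eLpNorm_mul_le_of_mem_trigPoly {v : L2} (hv : v ∈ trigPoly) :
    eLpNorm (fun x => X oneL2 x * v x) 2 μc ≤ ‖X‖₊ * eLpNorm v 2 μc := by
  obtain ⟨N, hN⟩ := exists_Mz_pow_mem_analyticPoly hv
  set w := (Mz ^ N) v
  have hw := ae_norm_Mz_pow_apply N v
  calc eLpNorm (fun x => X oneL2 x * v x) 2 μc = ‖X w‖ₑ := by
        rw [Lp.enorm_def]
        refine eLpNorm_congr_norm_ae ?_
        filter_upwards [coeFn_apply_of_mem_analyticPoly hX (hN N le_rfl), hw] with x h1 h2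
        rw [h1, norm_mul, norm_mul, h2]
    _ ≤ ‖X‖ₑ * ‖w‖ₑ := X.le_opENorm w
    _ = ‖X‖₊ * eLpNorm v 2 μc := by
        rw [Lp.enorm_def, eLpNorm_congr_norm_ae hw]
        rfl

end Intertwining

/-- **Theorem.** If `X M_z P₊ = M_z X P₊` then `φ := X(1)` is (essentially) bounded with
`‖φ‖_∞ ≤ ‖X‖`, and `X P₊ = M_φ P₊`. -/
theorem analytic_part_of_paired (X : L2 →L[ℂ] L2)
    (h : X.comp (Mz.comp Pplus) = Mz.comp (X.comp Pplus)) :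
    ∃ hφ : MemLp (⇑(X oneL2)) ∞ μc,
      (eLpNorm (⇑(X oneL2)) ∞ μc).toReal ≤ ‖X‖ ∧
      X.comp Pplus = (Mop (⇑(X oneL2)) hφ).comp Pplus := by
  have hX : ∀ f ∈ Hardy, X (Mz f) = Mz (X f) := fun f hf => by
    simpa [Pplus_apply_of_mem hf] using congr($h f)
  have hbound : ∀ᵐ x ∂μc, ‖X oneL2 x‖ₑ ≤ ‖X‖₊ :=
    ae_enorm_le_of_eLpNorm_mul_le (by simp) (Lp.aestronglyMeasurable _)
      (eLpNorm_mul_le_of_dense (Lp.aestronglyMeasurable _) dense_trigPoly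
        fun _ => eLpNorm_mul_le_of_mem_trigPoly hX)
  have hφ := memLp_top_of_bound_enorm (Lp.aestronglyMeasurable _) _ hbound
  refine ⟨hφ, ?_, ?_⟩
  · refine ENNReal.toReal_le_of_le_ofReal (norm_nonneg X) ?_
    rw [eLpNorm_exponent_top, ofReal_norm]
    exact eLpNormEssSup_le_of_ae_enorm_bound hbound
  · refine ContinuousLinearMap.ext_on dense_trigPoly ?_
    rintro _ ⟨n, rfl⟩
    exact Lp.ext ((coeFn_apply_of_mem_analyticPoly hX (Pplus_fourierLp_mem_analyticPoly n)).trans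
      (Mop_coeFn _ hφ _).symm)

end PaperTH
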